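/- arXiv:2604.27971 — 2 statements merged into one kernel-verified Lean document; each statement's English description precedes it below -/
import Mathlib

section
/- Let 0 < μ ≤ 1/2 and define ω₀ = 0, ω_m = μ / sqrt(1 - ω_{m-1}²). If (ρ_m) is a sequence of nonnegative reals with ρ₀ > 0 and ρ_m ≤ ω_m ρ_{m-1} for all m ≥ 1, then ρ_m ≤ ρ₀ · μ^{m/2} / sqrt(U_m(1/(2μ))) for all m ≥ 0, where U_m is the Chebyshev polynomial of the second kind. -/
noncomputable def omegaSeq (μ : ℝ) : ℕ → ℝ
  | 0 => 0
  | m + 1 => μ / Real.sqrt (1 - (omegaSeq μ m) ^ 2)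

noncomputable def uSeq (μ : ℝ) (m : ℕ) : ℝ :=
  (Polynomial.Chebyshev.U ℝ (m : ℤ)).eval (1 / (2 * μ))

lemma uSeq_zero (μ : ℝ) : uSeq μ 0 = 1 := by
  simp [uSeq, Polynomial.Chebyshev.U_zero]

lemma uSeq_one (μ : ℝ) : uSeq μ 1 = 2 * (1 / (2 * μ)) := by
  simp [uSeq, Polynomial.Chebyshev.U_one]

lemma uSeq_rec (μ : ℝ) (m : ℕ) :
    uSeq μ (m + 2) = 2 * (1 / (2 * μ)) * uSeq μ (m + 1) - uSeq μ m := by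
  have : ((m : ℤ) + 2) = ((m + 2 : ℕ) : ℤ) := by push_cast; ring
  rw [uSeq, ← this, Polynomial.Chebyshev.U_add_two]
  push_cast
  simp [uSeq, Polynomial.eval_sub, Polynomial.eval_mul]

lemma uSeq_ge (μ : ℝ) (hμ0 : 0 < μ) (hμ : μ ≤ 1 / 2) :
    ∀ m, 1 ≤ uSeq μ m ∧ uSeq μ m ≤ uSeq μ (m + 1) := by
  have hx : (1 : ℝ) ≤ 1 / (2 * μ) := by
    rw [le_div_iff₀ (by linarith)]; linarith
  intro m
  induction m with
  | zero =>
      constructor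
      · rw [uSeq_zero]
      · rw [uSeq_zero, uSeq_one]; linarith
  | succ n ih =>
      obtain ⟨h1, h2⟩ := ih
      have hrec := uSeq_rec μ n
      have h3 : uSeq μ (n + 1) ≤ uSeq μ (n + 2) := by
        have : 2 * uSeq μ (n + 1) ≤ 2 * (1 / (2 * μ)) * uSeq μ (n + 1) := by
          nlinarith
        linarith
      exact ⟨le_trans h1 h2, h3⟩

lemma omega_sq (μ : ℝ) (hμ0 : 0 < μ) (hμ : μ ≤ 1 / 2) :
    ∀ m, (omegaSeq μ (m + 1)) ^ 2 = μ * uSeq μ m / uSeq μ (m + 1) := by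
  intro m
  induction m with
  | zero =>
      have h1 : omegaSeq μ 1 = μ := by
        simp [omegaSeq, Real.sqrt_one]
      rw [h1, uSeq_zero, uSeq_one]
      field_simp
  | succ n ih =>
      have hpos := uSeq_ge μ hμ0 hμ
      have hn1 : (1 : ℝ) ≤ uSeq μ (n + 1) := (hpos (n + 1)).1
      have hn2 : (1 : ℝ) ≤ uSeq μ (n + 2) := (hpos (n + 2)).1
      have hrec := uSeq_rec μ n
      have hkey : μ * uSeq μ (n + 2) = uSeq μ (n + 1) - μ * uSeq μ n := by
        rw [hrec]; field_simp
      have ht : 1 - (omegaSeq μ (n + 1)) ^ 2 = μ * uSeq μ (n + 2) / uSeq μ (n + 1) := by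
        rw [ih, hkey]; field_simp
      have htpos : 0 < μ * uSeq μ (n + 2) / uSeq μ (n + 1) :=
        div_pos (by nlinarith) (by linarith)
      show (μ / Real.sqrt (1 - (omegaSeq μ (n + 1)) ^ 2)) ^ 2 = _
      rw [ht, div_pow, Real.sq_sqrt htpos.le]
      show _ = μ * uSeq μ (n + 1) / uSeq μ (n + 2)
      rw [div_div_eq_mul_div]
      rw [div_eq_div_iff (by nlinarith) (by nlinarith)]
      ring

lemma omega_nonneg (μ : ℝ) (hμ0 : 0 < μ) (m : ℕ) : 0 ≤ omegaSeq μ (m + 1) := by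
  show 0 ≤ μ / Real.sqrt _
  positivity

theorem stmt_12 (μ : ℝ) (hμ0 : 0 < μ) (hμ : μ ≤ 1 / 2) (ρ : ℕ → ℝ)
    (hρ0 : 0 < ρ 0) (hρnn : ∀ m, 0 ≤ ρ m)
    (hρ : ∀ m : ℕ, 1 ≤ m → ρ m ≤ omegaSeq μ m * ρ (m - 1)) (m : ℕ) :
    ρ m ≤ ρ 0 * μ ^ ((m : ℝ) / 2) /
      Real.sqrt ((Polynomial.Chebyshev.U ℝ m).eval (1 / (2 * μ))) := by
  have hgoal : ∀ k : ℕ, ρ k ≤ ρ 0 * μ ^ ((k : ℝ) / 2) / Real.sqrt (uSeq μ k) := by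
    intro k
    induction k with
    | zero =>
        simp [uSeq_zero]
    | succ n ih =>
        have hU := uSeq_ge μ hμ0 hμ
        have hn : (1 : ℝ) ≤ uSeq μ n := (hU n).1
        have hn1 : (1 : ℝ) ≤ uSeq μ (n + 1) := (hU (n + 1)).1
        have hω : omegaSeq μ (n + 1) =
            Real.sqrt μ * Real.sqrt (uSeq μ n) / Real.sqrt (uSeq μ (n + 1)) := by
          have h1 : omegaSeq μ (n + 1) =
              Real.sqrt ((omegaSeq μ (n + 1)) ^ 2) := by
            rw [Real.sqrt_sq (omega_nonneg μ hμ0 n)]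
          rw [h1, omega_sq μ hμ0 hμ n, Real.sqrt_div' _ (by positivity),
            Real.sqrt_mul hμ0.le]
        have hωnn := omega_nonneg μ hμ0 n
        calc ρ (n + 1) ≤ omegaSeq μ (n + 1) * ρ n := by
              have := hρ (n + 1) (by omega)
              simpa using this
          _ ≤ omegaSeq μ (n + 1) * (ρ 0 * μ ^ ((n : ℝ) / 2) / Real.sqrt (uSeq μ n)) := by
              exact mul_le_mul_of_nonneg_left ih hωnn
          _ = ρ 0 * μ ^ (((n : ℝ) + 1) / 2) / Real.sqrt (uSeq μ (n + 1)) := by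
              rw [hω]
              have hsq : Real.sqrt (uSeq μ n) ≠ 0 := by positivity
              have hsq1 : Real.sqrt (uSeq μ (n + 1)) ≠ 0 := by positivity
              have hμhalf : μ ^ (((n : ℝ) + 1) / 2) =
                  μ ^ ((n : ℝ) / 2) * Real.sqrt μ := by
                rw [Real.sqrt_eq_rpow, ← Real.rpow_add hμ0]
                ring_nf
              rw [hμhalf]
              field_simp
          _ = ρ 0 * μ ^ (((n + 1 : ℕ) : ℝ) / 2) / Real.sqrt (uSeq μ (n + 1)) := by
              push_cast; ring_nf
  have := hgoal m
  simpa [uSeq] using this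
end

section
/- Let 0 < μ ≤ 1/2 and define ω₀ = 0, ω_m = μ / sqrt(1 - ω_{m-1}²), and let b_m satisfy b₀ = b₁ = 1, b_m = b_{m-1} - μ² b_{m-2}. Then 1 - ω_m² = b_{m+1}/b_m for all m ≥ 0. -/
noncomputable def bSeq (μ : ℝ) : ℕ → ℝ
  | 0 => 1
  | 1 => 1
  | m + 2 => bSeq μ (m + 1) - μ ^ 2 * bSeq μ m

lemma bSeq_pos (μ : ℝ) (hμ0 : 0 < μ) (hμ : μ ≤ 1 / 2) :
    ∀ m, 0 < bSeq μ m ∧ bSeq μ m / 2 ≤ bSeq μ (m + 1) := by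
  intro m
  induction m with
  | zero => simp [bSeq]; norm_num
  | succ n ih =>
    have h1 : 0 < bSeq μ (n + 1) := by linarith [ih.1, ih.2]
    refine ⟨h1, ?_⟩
    have hμ2 : μ ^ 2 ≤ 1 / 4 := by nlinarith
    have : bSeq μ (n + 2) = bSeq μ (n + 1) - μ ^ 2 * bSeq μ n := rfl
    rw [this]
    nlinarith [ih.1, ih.2, sq_nonneg μ]

theorem stmt_18 (μ : ℝ) (hμ0 : 0 < μ) (hμ : μ ≤ 1 / 2) (m : ℕ) :
    1 - (omegaSeq μ m) ^ 2 = bSeq μ (m + 1) / bSeq μ m := by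
  induction m with
  | zero => simp [omegaSeq, bSeq]
  | succ n ih =>
    have hbn := (bSeq_pos μ hμ0 hμ n).1
    have hbn1 := (bSeq_pos μ hμ0 hμ (n + 1)).1
    have hx : 0 < 1 - (omegaSeq μ n) ^ 2 := by
      rw [ih]; positivity
    have hω : omegaSeq μ (n + 1) = μ / Real.sqrt (1 - (omegaSeq μ n) ^ 2) := rfl
    have hs : Real.sqrt (1 - (omegaSeq μ n) ^ 2) ^ 2 = 1 - (omegaSeq μ n) ^ 2 :=
      Real.sq_sqrt hx.le
    have hsne : Real.sqrt (1 - (omegaSeq μ n) ^ 2) ≠ 0 := by positivity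
    have hb2 : bSeq μ (n + 2) = bSeq μ (n + 1) - μ ^ 2 * bSeq μ n := rfl
    rw [hω, div_pow, hs, hb2, ih]
    field_simp
end
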